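/- For γ > 1/2 and any fixed μ > 0, there is a constant K such that for all n ∈ ℕ and all Δt ∈ (0, 1], |(-1)^n C(-γ, n) e^(-μ n Δt)| · Δt^(2γ-1) ≤ K · Δt^(min(2γ-1, γ)). -/

import Mathlib

/-- Generalized binomial coefficient `C(z, ℓ) = z(z-1)⋯(z-ℓ+1)/ℓ!`. -/
noncomputable def gbinom (z : ℝ) (ℓ : ℕ) : ℝ :=
  (descPochhammer ℝ ℓ).eval z / (Nat.factorial ℓ)

/-!
Since `(-1)ⁿ C(-γ, n) = γ(γ+1)⋯(γ+n-1)/n!`, Euler's limit formula `Γ(γ) = lim GammaSeq γ n`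
bounds the coefficient by `C (n+1)^(γ-1)`. Split `Δt^(2γ-1) = Δt^p Δt^m` with `m = min (2γ-1) γ`,
so that `p = max (γ-1) 0 ≥ γ - 1`: the coefficient times `Δt^p` is at most `C ((n+1)Δt)^p`,
and `(x+1)^p e^{-μx}` is bounded in `x = nΔt ≥ 0`.
-/

open Filter Topology Real
open scoped Nat

lemma ascPochhammer_eval_eq_prod_range {R : Type*} [CommSemiring R] (n : ℕ) (r : R) :
    (ascPochhammer R n).eval r = ∏ j ∈ Finset.range n, (r + j) := by
  induction n with
  | zero => simp
  | succ n ih => rw [ascPochhammer_succ_eval, ih, Finset.prod_range_succ]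

lemma neg_one_pow_mul_gbinom_neg (γ : ℝ) (n : ℕ) :
    (-1 : ℝ) ^ n * gbinom (-γ) n = (ascPochhammer ℝ n).eval γ / n ! := by
  rw [gbinom, ← mul_div_assoc, ← ascPochhammer_eval_neg_eq_descPochhammer, neg_neg]

lemma GammaSeq_eq_ascPochhammer_eval (γ : ℝ) (n : ℕ) :
    GammaSeq γ n = (n : ℝ) ^ γ * n ! / ((ascPochhammer ℝ n).eval γ * (γ + n)) := by
  rw [GammaSeq, ← ascPochhammer_eval_eq_prod_range, ascPochhammer_succ_eval]

lemma tendsto_ascPochhammer_eval_div_factorial_div_rpow {γ : ℝ} (hγ : 0 < γ) :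
    Tendsto (fun n : ℕ => (ascPochhammer ℝ n).eval γ / n ! / ((n : ℝ) + 1) ^ (γ - 1))
      atTop (𝓝 (Gamma γ)⁻¹) := by
  have hlim : Tendsto (fun n : ℕ => ((n : ℝ) / (n + 1)) ^ (γ - 1) * ((n : ℝ) / (n + γ)) *
      (GammaSeq γ n)⁻¹) atTop (𝓝 (1 ^ (γ - 1) * 1 * (Gamma γ)⁻¹)) :=
    (((tendsto_natCast_div_add_atTop (1 : ℝ)).rpow_const (Or.inl one_ne_zero)).mul
      (tendsto_natCast_div_add_atTop γ)).mul
      ((GammaSeq_tendsto_Gamma γ).inv₀ (Gamma_pos_of_pos hγ).ne')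
  rw [one_rpow, one_mul, one_mul] at hlim
  refine hlim.congr' ?_
  filter_upwards [eventually_ne_atTop 0] with n hn
  have hn' : (n : ℝ) ≠ 0 := Nat.cast_ne_zero.2 hn
  have hA : (ascPochhammer ℝ n).eval γ ≠ 0 := (ascPochhammer_pos n γ hγ).ne'
  rw [GammaSeq_eq_ascPochhammer_eval, div_rpow (by positivity) (by positivity), rpow_sub_one hn']
  field_simp
  ring

lemma exists_ascPochhammer_eval_div_factorial_le {γ : ℝ} (hγ : 0 < γ) :
    ∃ C, ∀ n : ℕ, (ascPochhammer ℝ n).eval γ / n ! ≤ C * ((n : ℝ) + 1) ^ (γ - 1) := by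
  obtain ⟨C, hC⟩ := (tendsto_ascPochhammer_eval_div_factorial_div_rpow hγ).bddAbove_range
  exact ⟨C, fun n => (div_le_iff₀ (by positivity)).1 (hC ⟨n, rfl⟩)⟩

lemma add_one_rpow_mul_exp_neg_mul_le {p μ x : ℝ} (hμ : 0 < μ) (hx : 0 ≤ x) :
    (x + 1) ^ p * exp (-(μ * x)) ≤ exp μ * ⌈p⌉₊ ! / μ ^ ⌈p⌉₊ := by
  set q := ⌈p⌉₊
  have hpow : (x + 1) ^ p ≤ (x + 1) ^ q := by
    rw [← rpow_natCast]
    exact rpow_le_rpow_of_exponent_le (by linarith) (Nat.le_ceil p)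
  have hexp : (μ * (x + 1)) ^ q / q ! ≤ exp (μ * (x + 1)) :=
    pow_div_factorial_le_exp _ (by positivity) q
  calc (x + 1) ^ p * exp (-(μ * x))
      ≤ (μ * (x + 1)) ^ q / q ! * (q ! / μ ^ q * exp (-(μ * x))) := by
        rw [mul_pow]; field_simp; gcongr
    _ ≤ exp (μ * (x + 1)) * (q ! / μ ^ q * exp (-(μ * x))) := by gcongr
    _ = exp μ * q ! / μ ^ q := by
        rw [mul_add, mul_one, exp_add, exp_neg]; field_simp

theorem scaled_coefficient_bound (γ μ : ℝ) (hγ : 1 / 2 < γ) (hμ : 0 < μ) :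
    ∃ K : ℝ, 0 < K ∧ ∀ n : ℕ, ∀ Δt : ℝ, 0 < Δt → Δt ≤ 1 →
      |(-1 : ℝ) ^ n * gbinom (-γ) n| * Real.exp (-μ * n * Δt) * Δt ^ (2 * γ - 1) ≤
        K * Δt ^ (min (2 * γ - 1) γ) := by
  have hγ₀ : 0 < γ := by linarith
  obtain ⟨C, hC⟩ := exists_ascPochhammer_eval_div_factorial_le hγ₀
  have hC₀ : 0 < C := by linarith [show 1 ≤ C by simpa using hC 0]
  set m := min (2 * γ - 1) γ
  set p := 2 * γ - 1 - m
  have hp : 0 ≤ p := sub_nonneg.2 (min_le_left _ _)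
  have hγp : γ - 1 ≤ p := by linarith [min_le_right (2 * γ - 1) γ]
  refine ⟨C * (exp μ * ⌈p⌉₊ ! / μ ^ ⌈p⌉₊), by positivity, fun n Δt hΔt hΔt₁ => ?_⟩
  have hP : (ascPochhammer ℝ n).eval γ / n ! ≤ C * ((n : ℝ) + 1) ^ p :=
    (hC n).trans (by gcongr; simp)
  calc |(-1 : ℝ) ^ n * gbinom (-γ) n| * exp (-μ * n * Δt) * Δt ^ (2 * γ - 1)
      = (ascPochhammer ℝ n).eval γ / n ! * Δt ^ p * exp (-(μ * (n * Δt))) * Δt ^ m := by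
        rw [neg_one_pow_mul_gbinom_neg, abs_of_pos (div_pos (ascPochhammer_pos n γ hγ₀)
          (by positivity)), show 2 * γ - 1 = p + m by ring, rpow_add hΔt]
        ring_nf
    _ ≤ C * ((n : ℝ) + 1) ^ p * Δt ^ p * exp (-(μ * (n * Δt))) * Δt ^ m := by gcongr
    _ = C * ((((n : ℝ) + 1) * Δt) ^ p * exp (-(μ * (n * Δt)))) * Δt ^ m := by
        rw [mul_rpow (by positivity) hΔt.le]; ring
    _ ≤ C * ((n * Δt + 1) ^ p * exp (-(μ * (n * Δt)))) * Δt ^ m := by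
        gcongr; nlinarith
    _ ≤ C * (exp μ * ⌈p⌉₊ ! / μ ^ ⌈p⌉₊) * Δt ^ m := by
        gcongr
        exact add_one_rpow_mul_exp_neg_mul_le hμ (by positivity)
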